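/- Let PP₁₁(t) = (t+1)²(t+1/2)²(t+1/3)(t+1/6)·t²·(t−1/6)(t−1/3)(t−1/2). For every finite set C on the unit sphere of EuclideanSpace ℝ (Fin 48) satisfying ∑_{x,y∈C} (50·⟨x,y⟩³ − 3·⟨x,y⟩)/47 = 0 (i.e., the third moment M₃(C) of C vanishes, as holds for every antipodal code and every spherical 3-design), one has ∑_{x,y∈C} PP₁₁(⟨x,y⟩) ≥ |C|²/13478400. -/

import Mathlib

/-- The eleventh partial product of the Newton form at the `T₁` node multiset. -/
noncomputable def PP11 (t : ℝ) : ℝ :=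
  (t + 1) ^ 2 * (t + 1/2) ^ 2 * (t + 1/3) * (t + 1/6) * t ^ 2 *
    (t - 1/6) * (t - 1/3) * (t - 1/2)

/-!
On the unit sphere of `ℝ⁴⁸`, with `t = ⟪x, y⟫`,
`PP11 t = 1/13478400 - 118957/811814400 · P₃(t) + R(x, y)`, where `R` is a nonnegative
combination of kernels `Φ(x, y) · ⟪h_x, h_y⟫`: here `Φ` is `1`, `t`, `t² - 1/48` or their
product, which are Gram kernels of the features `x` and `x xᵀ - I/48`, and `⟪h_x, h_y⟫ = d! G_d(t)`
is the Fischer pairing of the zonal harmonics of degree `d ∈ {7, 8}` with poles `x` and `y`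
(`G_d` the monic Gegenbauer polynomial). Such kernels are positive semidefinite, so the double
sum of `R` over `C` is nonnegative, while the `P₃` term sums to zero by hypothesis.

The value of the Fischer pairing comes from the adjointness of multiplication by `X i` and
`∂ / ∂ X i`, which makes harmonic polynomials orthogonal to all multiples of `|X|²`.
-/

open MvPolynomial Finset
open scoped RealInnerProductSpace

noncomputable section

section Kernel

variable {V ι : Type*}

def IsPosSemidefKernel (K : V → V → ℝ) : Prop :=
  ∀ (s : Finset V) (c : V → ℝ), 0 ≤ ∑ x ∈ s, ∑ y ∈ s, c x * c y * K x y

def gramKernel [Fintype ι] (f : V → ι → ℝ) (x y : V) : ℝ := ∑ i, f x i * f y i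

lemma isPosSemidefKernel_one : IsPosSemidefKernel fun _ _ : V => (1 : ℝ) := fun s c => by
  simp only [mul_one, ← sum_mul_sum, ← sq]
  positivity

namespace IsPosSemidefKernel

variable {K L : V → V → ℝ}

lemma sum_sum_nonneg (hK : IsPosSemidefKernel K) (s : Finset V) :
    0 ≤ ∑ x ∈ s, ∑ y ∈ s, K x y := by
  simpa using hK s 1

lemma add (hK : IsPosSemidefKernel K) (hL : IsPosSemidefKernel L) :
    IsPosSemidefKernel fun x y => K x y + L x y := fun s c => by
  simpa only [mul_add, sum_add_distrib] using add_nonneg (hK s c) (hL s c)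

lemma const_mul (hK : IsPosSemidefKernel K) {a : ℝ} (ha : 0 ≤ a) :
    IsPosSemidefKernel fun x y => a * K x y := fun s c => by
  simpa only [mul_sum, mul_left_comm a] using mul_nonneg ha (hK s c)

lemma gramKernel_mul [Fintype ι] (hK : IsPosSemidefKernel K) (f : V → ι → ℝ) :
    IsPosSemidefKernel fun x y => gramKernel f x y * K x y := fun s c => by
  have h : ∑ x ∈ s, ∑ y ∈ s, c x * c y * (gramKernel f x y * K x y)
      = ∑ i, ∑ x ∈ s, ∑ y ∈ s, (c x * f x i) * (c y * f y i) * K x y := by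
    simp_rw [gramKernel, sum_comm (s := univ) (t := s), sum_mul, mul_sum]
    exact sum_congr rfl fun x _ => sum_congr rfl fun y _ => sum_congr rfl fun i _ => by ring
  rw [h]
  exact sum_nonneg fun i _ => hK s _

lemma gramKernel_poly_mul [Fintype ι] {κ : Type*} [Fintype κ] (hK : IsPosSemidefKernel K)
    (f : V → ι → ℝ) (g : V → κ → ℝ) {a b c d : ℝ} (ha : 0 ≤ a) (hb : 0 ≤ b) (hc : 0 ≤ c)
    (hd : 0 ≤ d) :
    IsPosSemidefKernel fun x y => (a + b * gramKernel f x y + c * gramKernel g x y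
      + d * (gramKernel f x y * gramKernel g x y)) * K x y := by
  have h := (((hK.const_mul ha).add ((hK.gramKernel_mul f).const_mul hb)).add
    ((hK.gramKernel_mul g).const_mul hc)).add
    (((hK.gramKernel_mul g).gramKernel_mul f).const_mul hd)
  convert h using 3
  ring

end IsPosSemidefKernel

end Kernel

lemma natCast_mul_pow_sub_one_mul {R : Type*} [CommSemiring R] (n : ℕ) (f : R) :
    (n : R) * f ^ (n - 1) * f = n * f ^ n := by
  cases n with
  | zero => simp
  | succ k => rw [Nat.add_sub_cancel, pow_succ, mul_assoc]

lemma natCast_mul_natCast_sub_one {R : Type*} [CommRing R] (n : ℕ) :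
    (n : R) * ((n - 1 : ℕ) : R) = n * (n - 1) := by
  cases n with
  | zero => simp
  | succ k => rw [Nat.add_sub_cancel]; push_cast; ring

namespace MvPolynomial

section Fischer

variable {σ : Type*} [Fintype σ]

def fischerWeight (α : σ →₀ ℕ) : ℝ := ∏ i, ((α i).factorial : ℝ)

lemma fischerWeight_nonneg (α : σ →₀ ℕ) : 0 ≤ fischerWeight α :=
  prod_nonneg fun _ _ => by positivity

lemma fischerWeight_eq_mul_of_ne_zero {α : σ →₀ ℕ} {i : σ} (h : α i ≠ 0) :
    fischerWeight α = fischerWeight (α - Finsupp.single i 1) * α i := by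
  classical
  have hrest : ∏ j ∈ univ.erase i, (((α - Finsupp.single i 1 : σ →₀ ℕ) j).factorial : ℝ)
      = ∏ j ∈ univ.erase i, ((α j).factorial : ℝ) :=
    prod_congr rfl fun j hj => by simp [Ne.symm (ne_of_mem_erase hj)]
  rw [fischerWeight, fischerWeight, ← mul_prod_erase univ _ (mem_univ i),
    ← mul_prod_erase univ _ (mem_univ i), hrest, Finsupp.tsub_apply, Finsupp.single_eq_same,
    ← Nat.mul_factorial_pred h]
  push_cast
  ring

/-- The Fischer (apolar) inner product `(p(∂) q)(0)`, written in coordinates. -/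
def fischerInner (p q : MvPolynomial σ ℝ) : ℝ :=
  ∑ α ∈ p.support ∪ q.support, p.coeff α * q.coeff α * fischerWeight α

lemma fischerInner_eq_sum {p q : MvPolynomial σ ℝ} {s : Finset (σ →₀ ℕ)} (h : p.support ⊆ s) :
    fischerInner p q = ∑ α ∈ s, p.coeff α * q.coeff α * fischerWeight α := by
  have key : ∀ t, p.support ⊆ t → ∑ α ∈ t, p.coeff α * q.coeff α * fischerWeight α
      = ∑ α ∈ p.support, p.coeff α * q.coeff α * fischerWeight α := fun t ht =>
    (sum_subset ht fun α _ hα => by rw [notMem_support_iff.mp hα, zero_mul, zero_mul]).symm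
  rw [fischerInner, key _ subset_union_left, key _ h]

lemma fischerInner_comm (p q : MvPolynomial σ ℝ) : fischerInner p q = fischerInner q p := by
  simp only [fischerInner, union_comm p.support, mul_comm (p.coeff _)]

lemma fischerInner_add_left (p₁ p₂ q : MvPolynomial σ ℝ) :
    fischerInner (p₁ + p₂) q = fischerInner p₁ q + fischerInner p₂ q := by
  classical
  rw [fischerInner_eq_sum support_add, fischerInner_eq_sum subset_union_left,
    fischerInner_eq_sum subset_union_right, ← sum_add_distrib]
  exact sum_congr rfl fun α _ => by rw [coeff_add]; ring

lemma fischerInner_smul_left (c : ℝ) (p q : MvPolynomial σ ℝ) :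
    fischerInner (c • p) q = c * fischerInner p q := by
  rw [fischerInner_eq_sum support_smul, fischerInner_eq_sum subset_rfl, mul_sum]
  exact sum_congr rfl fun α _ => by rw [coeff_smul, smul_eq_mul]; ring

lemma fischerInner_sum_left {ι : Type*} (s : Finset ι) (p : ι → MvPolynomial σ ℝ)
    (q : MvPolynomial σ ℝ) : fischerInner (∑ i ∈ s, p i) q = ∑ i ∈ s, fischerInner (p i) q := by
  classical
  induction s using Finset.induction_on with
  | empty => simp [fischerInner]
  | insert i s hi ih => rw [sum_insert hi, fischerInner_add_left, ih, sum_insert hi]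

lemma fischerInner_smul_right (c : ℝ) (p q : MvPolynomial σ ℝ) :
    fischerInner p (c • q) = c * fischerInner p q := by
  rw [fischerInner_comm, fischerInner_smul_left, fischerInner_comm]

lemma fischerInner_add_right (p q₁ q₂ : MvPolynomial σ ℝ) :
    fischerInner p (q₁ + q₂) = fischerInner p q₁ + fischerInner p q₂ := by
  simp only [fischerInner_comm p, fischerInner_add_left]

lemma fischerInner_sum_right {ι : Type*} (s : Finset ι) (p : MvPolynomial σ ℝ)
    (q : ι → MvPolynomial σ ℝ) : fischerInner p (∑ i ∈ s, q i) = ∑ i ∈ s, fischerInner p (q i) := by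
  simp only [fischerInner_comm p, fischerInner_sum_left]

lemma fischerInner_self_nonneg (p : MvPolynomial σ ℝ) : 0 ≤ fischerInner p p :=
  sum_nonneg fun α _ => mul_nonneg (mul_self_nonneg _) (fischerWeight_nonneg α)

lemma fischerInner_monomial_left (α : σ →₀ ℕ) (c : ℝ) (q : MvPolynomial σ ℝ) :
    fischerInner (monomial α c) q = c * q.coeff α * fischerWeight α := by
  classical
  rw [fischerInner_eq_sum support_monomial_subset, sum_singleton, coeff_monomial, if_pos rfl]

lemma fischerInner_one_one : fischerInner (1 : MvPolynomial σ ℝ) 1 = 1 := by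
  rw [← C_1, C_apply, fischerInner_monomial_left]
  simp [fischerWeight]

lemma fischerInner_X_mul_left (i : σ) (p q : MvPolynomial σ ℝ) :
    fischerInner (X i * p) q = fischerInner p (pderiv i q) := by
  classical
  induction q using MvPolynomial.induction_on' with
  | add q₁ q₂ h₁ h₂ =>
    rw [fischerInner_add_right, map_add, fischerInner_add_right, h₁, h₂]
  | monomial α c =>
    rw [fischerInner_comm, fischerInner_monomial_left, pderiv_monomial, fischerInner_comm,
      fischerInner_monomial_left, coeff_X_mul']
    by_cases h : i ∈ α.support
    · rw [if_pos h, fischerWeight_eq_mul_of_ne_zero (Finsupp.mem_support_iff.mp h)]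
      ring
    · rw [if_neg h, Finsupp.notMem_support_iff.mp h]
      simp

lemma isPosSemidefKernel_fischerInner {V : Type*} (T : V → MvPolynomial σ ℝ) :
    IsPosSemidefKernel fun x y => fischerInner (T x) (T y) := fun s c => by
  have h : ∑ x ∈ s, ∑ y ∈ s, c x * c y * fischerInner (T x) (T y)
      = fischerInner (∑ x ∈ s, c x • T x) (∑ y ∈ s, c y • T y) := by
    rw [fischerInner_sum_left]
    simp only [fischerInner_smul_left, fischerInner_sum_right, fischerInner_smul_right]
    exact sum_congr rfl fun x _ => sum_congr rfl fun y _ => by ring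
  rw [h]
  exact fischerInner_self_nonneg _

end Fischer

section Laplacian

variable {σ : Type*} [Fintype σ]

def laplacian : MvPolynomial σ ℝ →ₗ[ℝ] MvPolynomial σ ℝ :=
  ∑ i, (pderiv i).toLinearMap ∘ₗ (pderiv i).toLinearMap

lemma laplacian_apply (p : MvPolynomial σ ℝ) : laplacian p = ∑ i, pderiv i (pderiv i p) := by
  simp [laplacian]

def sumSq : MvPolynomial σ ℝ := ∑ i, X i ^ 2

def linForm (x : σ → ℝ) : MvPolynomial σ ℝ := ∑ i, C (x i) * X i

lemma pderiv_sumSq (i : σ) : pderiv i (sumSq : MvPolynomial σ ℝ) = 2 * X i := by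
  rw [sumSq, map_sum, sum_eq_single i (fun j _ hj => by rw [pderiv_pow, pderiv_X_of_ne hj,
    mul_zero]) (by simp), pderiv_pow, pderiv_X_self]
  norm_num

lemma pderiv_linForm (i : σ) (x : σ → ℝ) : pderiv i (linForm x) = C (x i) := by
  rw [linForm, map_sum, sum_eq_single i (fun j _ hj => by rw [pderiv_C_mul, pderiv_X_of_ne hj,
    mul_zero]) (by simp), pderiv_C_mul, pderiv_X_self, mul_one]

lemma laplacian_sumSq_pow_mul_linForm_pow (a m : ℕ) (x : σ → ℝ) :
    laplacian (sumSq ^ a * linForm x ^ m)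
      = (a * (2 * Fintype.card σ + 4 * ((a : ℝ) - 1) + 4 * m)) • (sumSq ^ (a - 1) * linForm x ^ m)
        + (m * ((m : ℝ) - 1) * ∑ i, x i ^ 2) • (sumSq ^ a * linForm x ^ (m - 2)) := by
  set R : MvPolynomial σ ℝ := sumSq
  set L := linForm x
  have hsecond : ∀ j, pderiv j (pderiv j (R ^ a * L ^ m))
      = (4 * (a : MvPolynomial σ ℝ) * ((a - 1 : ℕ) : MvPolynomial σ ℝ) * R ^ (a - 1 - 1) * L ^ m)
          * (X j * X j)
        + (4 * (a : MvPolynomial σ ℝ) * (m : MvPolynomial σ ℝ) * R ^ (a - 1) * L ^ (m - 1))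
          * (C (x j) * X j)
        + ((m : MvPolynomial σ ℝ) * ((m - 1 : ℕ) : MvPolynomial σ ℝ) * R ^ a * L ^ (m - 1 - 1))
          * (C (x j) * C (x j))
        + 2 * (a : MvPolynomial σ ℝ) * R ^ (a - 1) * L ^ m := by
    intro j
    have h2 : pderiv j (2 : MvPolynomial σ ℝ) = 0 := by
      simpa using (pderiv j).map_natCast 2
    simp only [map_add, pderiv_mul, pderiv_pow, pderiv_sumSq, pderiv_linForm, pderiv_X_self,
      pderiv_C, Derivation.map_natCast, h2, R, L]
    ring
  set s := ∑ i, x i ^ 2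
  have hR : ∑ j, X j * X j = R := by simp only [R, sumSq, sq]
  have hs : ∑ j, C (x j) * C (x j) = (C s : MvPolynomial σ ℝ) := by
    simp only [s, map_sum, ← map_mul, sq]
  rw [laplacian_apply, sum_congr rfl fun j _ => hsecond j]
  simp only [sum_add_distrib, ← mul_sum, sum_const, card_univ, hR, hs, nsmul_eq_mul,
    smul_eq_C_mul, map_mul, map_add, map_sub, map_natCast, map_ofNat, map_one]
  rw [show ∑ j, C (x j) * X j = L from rfl, show L ^ (m - 1 - 1) = L ^ (m - 2) by rw [Nat.sub_sub]]
  linear_combination (4 * (a : MvPolynomial σ ℝ) * L ^ m) * natCast_mul_pow_sub_one_mul (a - 1) R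
    + (4 * (a : MvPolynomial σ ℝ) * R ^ (a - 1)) * natCast_mul_pow_sub_one_mul m L
    + (4 * R ^ (a - 1) * L ^ m) * natCast_mul_natCast_sub_one (R := MvPolynomial σ ℝ) a
    + (C s * R ^ a * L ^ (m - 2)) * natCast_mul_natCast_sub_one (R := MvPolynomial σ ℝ) m

lemma laplacian_linForm_pow (m : ℕ) (y : σ → ℝ) :
    laplacian (linForm y ^ (m + 2))
      = (((m : ℝ) + 2) * ((m : ℝ) + 1) * ∑ i, y i ^ 2) • linForm y ^ m := by
  rw [← one_mul (linForm y ^ (m + 2)), ← pow_zero sumSq, laplacian_sumSq_pow_mul_linForm_pow,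
    Nat.add_sub_cancel]
  simp only [Nat.cast_zero, zero_mul, zero_smul, zero_add, pow_zero, one_mul]
  congr 1
  push_cast
  ring

lemma fischerInner_sumSq_mul_left (p q : MvPolynomial σ ℝ) :
    fischerInner (sumSq * p) q = fischerInner p (laplacian q) := by
  rw [sumSq, sum_mul, fischerInner_sum_left, laplacian_apply, fischerInner_sum_right]
  exact sum_congr rfl fun i _ => by
    rw [sq, mul_assoc, fischerInner_X_mul_left, fischerInner_X_mul_left]

lemma fischerInner_sumSq_mul_right_of_laplacian_eq_zero {h : MvPolynomial σ ℝ}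
    (hh : laplacian h = 0) (p : MvPolynomial σ ℝ) : fischerInner h (sumSq * p) = 0 := by
  rw [fischerInner_comm, fischerInner_sumSq_mul_left, hh, ← zero_smul ℝ 0,
    fischerInner_smul_right, zero_mul]

lemma fischerInner_linForm_pow (x y : σ → ℝ) (m : ℕ) :
    fischerInner (linForm x ^ m) (linForm y ^ m) = m.factorial * (∑ i, x i * y i) ^ m := by
  induction m with
  | zero => simp [fischerInner_one_one]
  | succ m ih =>
    have hpderiv : ∀ i, pderiv i (linForm y ^ (m + 1)) = (((m : ℝ) + 1) * y i) • linForm y ^ m :=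
      fun i => by
        rw [pderiv_pow, pderiv_linForm, Nat.add_sub_cancel, smul_eq_C_mul]
        simp only [map_mul, map_add, map_natCast, map_one]
        push_cast
        ring
    have hterm : ∀ i, fischerInner (C (x i) * X i * linForm x ^ m) (linForm y ^ (m + 1))
        = x i * y i * ((m + 1) * (m.factorial * (∑ i, x i * y i) ^ m)) := fun i => by
      rw [mul_assoc, C_mul', fischerInner_smul_left, fischerInner_X_mul_left, hpderiv,
        fischerInner_smul_right, ih]
      ring
    rw [pow_succ', show linForm x * linForm x ^ m = ∑ i, C (x i) * X i * linForm x ^ m from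
      sum_mul _ _ _, fischerInner_sum_left, sum_congr rfl fun i _ => hterm i, ← sum_mul,
      Nat.factorial_succ]
    push_cast
    ring

lemma fischerInner_sumSq_pow_mul_linForm_pow (x y : σ → ℝ) (k m : ℕ) :
    fischerInner (sumSq ^ k * linForm x ^ m) (linForm y ^ (m + 2 * k))
      = (m + 2 * k).factorial * (∑ i, x i * y i) ^ m * (∑ i, y i ^ 2) ^ k := by
  induction k with
  | zero => simp [fischerInner_linForm_pow]
  | succ k ih =>
    rw [pow_succ', mul_assoc, fischerInner_sumSq_mul_left, show m + 2 * (k + 1) = m + 2 * k + 2 by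
      ring, laplacian_linForm_pow, fischerInner_smul_right, ih, Nat.factorial_succ,
      Nat.factorial_succ]
    push_cast
    ring

end Laplacian

end MvPolynomial

section Zonal

/-- Coefficients of the monic Gegenbauer polynomial `∑ₖ zonalCoeff n d k * t ^ (d - 2k)` of
degree `d` for the sphere in `ℝⁿ`; the recursion is the condition for
`∑ₖ zonalCoeff n d k • |X|^{2k} ⟪x, X⟫^{d-2k}` to be harmonic when `|x| = 1`. -/
def zonalCoeff (n d : ℕ) : ℕ → ℝ
  | 0 => 1
  | k + 1 => -zonalCoeff n d k * (((d : ℝ) - 2 * k) * ((d : ℝ) - 2 * k - 1))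
      / (2 * (k + 1) * ((n : ℝ) + 2 * d - 2 * k - 4))

def monicGegenbauer (n d : ℕ) (t : ℝ) : ℝ :=
  ∑ k ∈ range (d / 2 + 1), zonalCoeff n d k * t ^ (d - 2 * k)

lemma zonalCoeff_succ_mul_add {n d k : ℕ} (hn : 0 < n) (hk : k ≤ d / 2) :
    zonalCoeff n d (k + 1) * (((k + 1 : ℕ) : ℝ) * (2 * n + 4 * (((k + 1 : ℕ) : ℝ) - 1)
        + 4 * ((d - 2 * (k + 1) : ℕ) : ℝ)))
      + zonalCoeff n d k * (((d - 2 * k : ℕ) : ℝ) * (((d - 2 * k : ℕ) : ℝ) - 1)) = 0 := by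
  obtain ⟨r, rfl⟩ : ∃ r, d = 2 * k + r := ⟨d - 2 * k, by omega⟩
  rw [zonalCoeff]
  -- for `d - 2k ≤ 1` both terms vanish, through the factor `(d - 2k) (d - 2k - 1)`
  rcases r with _ | _ | r
  · simp
  · simp
  · rw [show 2 * k + (r + 2) - 2 * (k + 1) = r by omega,
      show 2 * k + (r + 2) - 2 * k = r + 2 by omega,
      show (n : ℝ) + 2 * ((2 * k + (r + 2) : ℕ) : ℝ) - 2 * k - 4 = n + 2 * k + 2 * r by
        push_cast; ring]
    have hden : (n : ℝ) + 2 * k + 2 * r ≠ 0 := by positivity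
    field_simp
    push_cast
    ring

lemma zonalCoeff_half_add_one (n d : ℕ) : zonalCoeff n d (d / 2 + 1) = 0 := by
  have h : ((d : ℝ) - 2 * (d / 2 : ℕ)) * ((d : ℝ) - 2 * (d / 2 : ℕ) - 1) = 0 := by
    obtain ⟨j, rfl | rfl⟩ := Nat.even_or_odd' d <;> norm_num [Nat.add_div]
  rw [zonalCoeff, h, mul_zero, zero_div]

end Zonal

namespace MvPolynomial

section Zonal

variable {σ : Type*} [Fintype σ]

def zonalHarmonic (d : ℕ) (x : σ → ℝ) : MvPolynomial σ ℝ :=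
  ∑ k ∈ range (d / 2 + 1), zonalCoeff (Fintype.card σ) d k • (sumSq ^ k * linForm x ^ (d - 2 * k))

lemma laplacian_zonalHarmonic (hn : 0 < Fintype.card σ) (d : ℕ) {x : σ → ℝ}
    (hx : ∑ i, x i ^ 2 = 1) : laplacian (zonalHarmonic d x) = 0 := by
  set n := Fintype.card σ
  set A : ℕ → MvPolynomial σ ℝ := fun k => (zonalCoeff n d k * ((k : ℝ) * (2 * n
    + 4 * ((k : ℝ) - 1) + 4 * ((d - 2 * k : ℕ) : ℝ)))) • (sumSq ^ (k - 1) * linForm x ^ (d - 2 * k))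
  have hterm : ∀ k ∈ range (d / 2 + 1),
      laplacian (zonalCoeff n d k • (sumSq ^ k * linForm x ^ (d - 2 * k))) = A k - A (k + 1) := by
    intro k hk
    have hrec := zonalCoeff_succ_mul_add hn (Nat.lt_succ_iff.mp (mem_range.mp hk)) (d := d)
    rw [map_smul, laplacian_sumSq_pow_mul_linForm_pow, hx, mul_one, smul_add, smul_smul, smul_smul,
      show d - 2 * k - 2 = d - 2 * (k + 1) by omega, eq_neg_of_add_eq_zero_right hrec,
      neg_smul, ← sub_eq_add_neg]
    simp only [A, Nat.add_sub_cancel]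
    rfl
  rw [zonalHarmonic, map_sum, sum_congr rfl hterm, sum_range_sub']
  simp [A, zonalCoeff_half_add_one]

lemma fischerInner_zonalHarmonic (hn : 0 < Fintype.card σ) (d : ℕ) {x y : σ → ℝ}
    (hx : ∑ i, x i ^ 2 = 1) (hy : ∑ i, y i ^ 2 = 1) :
    fischerInner (zonalHarmonic d x) (zonalHarmonic d y)
      = d.factorial * monicGegenbauer (Fintype.card σ) d (∑ i, x i * y i) := by
  have hharm := laplacian_zonalHarmonic hn d hx
  have hproj : fischerInner (zonalHarmonic d x) (zonalHarmonic d y)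
      = fischerInner (zonalHarmonic d x) (linForm y ^ d) := by
    rw [zonalHarmonic.eq_1 d y, fischerInner_sum_right, sum_eq_single 0]
    · rw [fischerInner_smul_right, zonalCoeff, pow_zero, one_mul, one_mul, Nat.mul_zero,
        Nat.sub_zero]
    · intro k _ hk
      obtain ⟨j, rfl⟩ := Nat.exists_eq_succ_of_ne_zero hk
      rw [fischerInner_smul_right, pow_succ', mul_assoc,
        fischerInner_sumSq_mul_right_of_laplacian_eq_zero hharm, mul_zero]
    · simp
  rw [hproj, zonalHarmonic, fischerInner_sum_left, monicGegenbauer, mul_sum]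
  refine sum_congr rfl fun k hk => ?_
  have h2k : d = d - 2 * k + 2 * k := by
    have := mem_range.mp hk
    omega
  rw [fischerInner_smul_left, show linForm y ^ d = linForm y ^ (d - 2 * k + 2 * k) by rw [← h2k],
    fischerInner_sumSq_pow_mul_linForm_pow, ← h2k, hy, one_pow, mul_one]
  ring

end Zonal

end MvPolynomial

section Features

variable {ι : Type*} [Fintype ι]

lemma EuclideanSpace.real_inner_eq_sum (x y : EuclideanSpace ℝ ι) : ⟪x, y⟫ = ∑ i, x i * y i := by
  simp [EuclideanSpace.inner_eq_star_dotProduct, dotProduct, mul_comm]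

lemma EuclideanSpace.sum_sq_eq_one {x : EuclideanSpace ℝ ι} (hx : ‖x‖ = 1) : ∑ i, x i ^ 2 = 1 := by
  rw [← EuclideanSpace.real_norm_sq_eq, hx, one_pow]

lemma gramKernel_ofLp (x y : EuclideanSpace ℝ ι) : gramKernel WithLp.ofLp x y = ⟪x, y⟫ :=
  (EuclideanSpace.real_inner_eq_sum x y).symm

variable [DecidableEq ι]

def tracelessSq (x : EuclideanSpace ℝ ι) (p : ι × ι) : ℝ :=
  x p.1 * x p.2 - if p.1 = p.2 then (Fintype.card ι : ℝ)⁻¹ else 0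

lemma gramKernel_tracelessSq {x y : EuclideanSpace ℝ ι} (hx : ‖x‖ = 1) (hy : ‖y‖ = 1) :
    gramKernel tracelessSq x y = ⟪x, y⟫ ^ 2 - (Fintype.card ι : ℝ)⁻¹ := by
  have hterm : ∀ i j, tracelessSq x (i, j) * tracelessSq y (i, j)
      = x i * y i * (x j * y j)
        + if i = j then (Fintype.card ι : ℝ)⁻¹ ^ 2 - (Fintype.card ι : ℝ)⁻¹ * (x i ^ 2 + y i ^ 2)
          else 0 := by
    intro i j
    by_cases h : i = j
    · subst h
      simp only [tracelessSq, if_true]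
      ring
    · simp only [tracelessSq, if_neg h]
      ring
  have hcard : (Fintype.card ι : ℝ) * (Fintype.card ι : ℝ)⁻¹ ^ 2 = (Fintype.card ι : ℝ)⁻¹ := by
    rcases eq_or_ne (Fintype.card ι : ℝ) 0 with h | h
    · simp [h]
    · field_simp
  simp only [gramKernel, Fintype.sum_prod_type, hterm, sum_add_distrib, sum_ite_eq, mem_univ,
    if_true, ← mul_sum, ← sum_mul, sum_sub_distrib, mul_add, EuclideanSpace.sum_sq_eq_one hx,
    EuclideanSpace.sum_sq_eq_one hy, sum_const, card_univ, nsmul_eq_mul,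
    EuclideanSpace.real_inner_eq_sum]
  rw [hcard]
  ring

end Features

/-- On the unit sphere this is `PP11 t - 1/13478400 + 118957/811814400 · P₃(t)`
(`PP11_inner_eq`). Its coefficients are the coordinates of that degree-11 polynomial in the basis
`t`, `t² - 1/48`, `(1, t, t² - 1/48, t (t² - 1/48)) · 7! G₇(t)`, `(same) · 8! G₈(t)`; that they are
all nonnegative is what the theorem rests on. -/
def PP11Remainder (x y : EuclideanSpace ℝ (Fin 48)) : ℝ :=
  3961 / 1758931200 * gramKernel WithLp.ofLp x y
    + 1 / 183222 * gramKernel tracelessSq x y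
  + (1533199 / 129918297600 + 16264187 / 120294720000 * gramKernel WithLp.ofLp x y
    + 704189 / 2706631200 * gramKernel tracelessSq x y
    + 1537 / 71604000 * (gramKernel WithLp.ofLp x y * gramKernel tracelessSq x y))
    * fischerInner (zonalHarmonic 7 x.ofLp) (zonalHarmonic 7 y.ofLp)
  + (317 / 237619200 + 135305 / 6928975872 * gramKernel WithLp.ofLp x y
    + 118933 / 2004912000 * gramKernel tracelessSq x y
    + 1 / 40320 * (gramKernel WithLp.ofLp x y * gramKernel tracelessSq x y))
    * fischerInner (zonalHarmonic 8 x.ofLp) (zonalHarmonic 8 y.ofLp)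

lemma isPosSemidefKernel_PP11Remainder : IsPosSemidefKernel PP11Remainder := by
  have h₁ := ((isPosSemidefKernel_one.gramKernel_mul WithLp.ofLp).const_mul
    (a := 3961 / 1758931200) (by norm_num)).add
    ((isPosSemidefKernel_one.gramKernel_mul (tracelessSq (ι := Fin 48))).const_mul
      (a := 1 / 183222) (by norm_num))
  have h₇ := (isPosSemidefKernel_fischerInner fun v : EuclideanSpace ℝ (Fin 48) =>
    zonalHarmonic 7 v.ofLp).gramKernel_poly_mul WithLp.ofLp (tracelessSq (ι := Fin 48))
    (a := 1533199 / 129918297600) (b := 16264187 / 120294720000) (c := 704189 / 2706631200)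
    (d := 1537 / 71604000) (by norm_num) (by norm_num) (by norm_num) (by norm_num)
  have h₈ := (isPosSemidefKernel_fischerInner fun v : EuclideanSpace ℝ (Fin 48) =>
    zonalHarmonic 8 v.ofLp).gramKernel_poly_mul WithLp.ofLp (tracelessSq (ι := Fin 48))
    (a := 317 / 237619200) (b := 135305 / 6928975872) (c := 118933 / 2004912000)
    (d := 1 / 40320) (by norm_num) (by norm_num) (by norm_num) (by norm_num)
  unfold PP11Remainder
  simpa only [mul_one] using (h₁.add h₇).add h₈

lemma PP11_inner_eq {x y : EuclideanSpace ℝ (Fin 48)} (hx : ‖x‖ = 1) (hy : ‖y‖ = 1) :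
    PP11 ⟪x, y⟫ = 1 / 13478400 + -118957 / 811814400 * ((50 * ⟪x, y⟫ ^ 3 - 3 * ⟪x, y⟫) / 47)
      + PP11Remainder x y := by
  have hx' := EuclideanSpace.sum_sq_eq_one hx
  have hy' := EuclideanSpace.sum_sq_eq_one hy
  rw [PP11Remainder, gramKernel_ofLp, gramKernel_tracelessSq hx hy,
    fischerInner_zonalHarmonic (by simp) 7 hx' hy', fischerInner_zonalHarmonic (by simp) 8 hx' hy',
    ← EuclideanSpace.real_inner_eq_sum]
  norm_num [monicGegenbauer, zonalCoeff, sum_range_succ, Nat.factorial, PP11]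
  ring

theorem PP11_sum_lower_bound_of_M3_eq_zero
    (C : Finset (EuclideanSpace ℝ (Fin 48)))
    (hCsphere : ∀ x ∈ C, ‖x‖ = 1)
    (hM3 : ∑ x ∈ C, ∑ y ∈ C,
      (50 * (inner ℝ x y : ℝ) ^ 3 - 3 * (inner ℝ x y : ℝ)) / 47 = 0) :
    ∑ x ∈ C, ∑ y ∈ C, PP11 (inner ℝ x y : ℝ) ≥ (C.card : ℝ) ^ 2 / 13478400 := by
  have hsplit : ∑ x ∈ C, ∑ y ∈ C, PP11 ⟪x, y⟫ = ∑ x ∈ C, ∑ y ∈ C, (1 / 13478400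
      + -118957 / 811814400 * ((50 * ⟪x, y⟫ ^ 3 - 3 * ⟪x, y⟫) / 47) + PP11Remainder x y) :=
    sum_congr rfl fun x hx => sum_congr rfl fun y hy =>
      PP11_inner_eq (hCsphere x hx) (hCsphere y hy)
  simp only [sum_add_distrib, ← mul_sum, hM3, sum_const, nsmul_eq_mul] at hsplit
  have hrem := isPosSemidefKernel_PP11Remainder.sum_sum_nonneg C
  rw [ge_iff_le, hsplit]
  nlinarith
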